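/- Let G be a finite simple graph on vertex set {1,…,n} (no self-loops) in which every vertex has at least one neighbor, with graph Laplacian L. Suppose L = U Σ Uᵀ where U ∈ ℝ^{n×n} and Σ ∈ ℝ^{n×n} is diagonal with nonnegative entries, and let Σ^{1/2} be the entrywise square root of Σ. Then for every permutation matrix M ∈ {0,1}^{n×n}, the matrix U Σ^{1/2} M satisfies (U Σ^{1/2} M)(U Σ^{1/2} M)ᵀ = L and is adjacency-identifying. -/

import Mathlib

open Matrix

/-- The unnormalized attention matrix `(1/√d_k)·(P W^Q)(P W^K)ᵀ`. -/
noncomputable def attn {n : ℕ} {m : Type*} [Fintype m] (dk : ℝ)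
    (P : Matrix (Fin n) m ℝ) (WQ WK : Matrix m m ℝ) : Matrix (Fin n) (Fin n) ℝ :=
  (1 / Real.sqrt dk) • ((P * WQ) * (P * WK)ᵀ)

/-- `P` is node-identifying: for some `W^Q, W^K`, the `(i,j)` entry of
`(1/√d_k)·(P W^Q)(P W^K)ᵀ` is a maximum of its row exactly when `i = j`. -/
def IsNodeIdentifying {n : ℕ} {m : Type*} [Fintype m] (dk : ℝ)
    (P : Matrix (Fin n) m ℝ) : Prop :=
  ∃ WQ WK : Matrix m m ℝ, ∀ i j,
    (∀ l, attn dk P WQ WK i l ≤ attn dk P WQ WK i j) ↔ i = j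

/-- `P` is adjacency-identifying: for some `W^Q, W^K`, the `(i,j)` entry of
`(1/√d_k)·(P W^Q)(P W^K)ᵀ` is a maximum of its row exactly when `i` and `j` are adjacent. -/
def IsAdjIdentifying {n : ℕ} {m : Type*} [Fintype m] (dk : ℝ) (G : SimpleGraph (Fin n))
    (P : Matrix (Fin n) m ℝ) : Prop :=
  ∃ WQ WK : Matrix m m ℝ, ∀ i j,
    (∀ l, attn dk P WQ WK i l ≤ attn dk P WQ WK i j) ↔ G.Adj i j

/-!
With `W^Q = -1` and `W^K = 1`, the attention matrix of a factor `P` of the Laplacian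
(`P Pᵀ = L`) is `-(1/√d_k) L`, so its row maxima are the row minima of `L`. In row `i` the
Laplacian has the entries `deg i ≥ 0` on the diagonal, `-1` at the neighbours of `i` and `0`
elsewhere; as soon as `i` has a neighbour, the minimum `-1` is attained exactly at the
neighbours. Finally `U Σ^{1/2} M` is such a factor because `M Mᵀ = 1` for a permutation matrix.
-/

namespace Matrix

theorem mul_transpose_eq_one_of_permutation {ι R : Type*} [Fintype ι] [DecidableEq ι]
    [Semiring R] (M : Matrix ι ι R)
    (hM01 : ∀ i j, M i j = 0 ∨ M i j = 1)
    (hMrow : ∀ i, ∃! j, M i j = 1) (hMcol : ∀ j, ∃! i, M i j = 1) :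
    M * Mᵀ = 1 := by
  ext i j
  obtain ⟨k, hk, hk_unique⟩ := hMrow i
  have hrow_zero : ∀ l, l ≠ k → M i l = 0 := fun l hl =>
    (hM01 i l).resolve_right fun h => hl (hk_unique l h)
  rw [mul_apply, Finset.sum_eq_single k (fun l _ hl => by simp [hrow_zero l hl])
    (by simp), hk, one_mul, transpose_apply, one_apply]
  split_ifs with hij
  · exact hij ▸ hk
  · refine (hM01 j k).resolve_right fun hjk => hij ?_
    exact (hMcol k).unique hk hjk

theorem mul_diagonal_sqrt_mul_mul_transpose {m n p : Type*} [Fintype n] [Fintype p]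
    [DecidableEq n] [DecidableEq p] (U : Matrix m n ℝ) (σ : n → ℝ) (hσ : ∀ i, 0 ≤ σ i)
    (M : Matrix n p ℝ) (hM : M * Mᵀ = 1) :
    (U * diagonal (fun i => Real.sqrt (σ i)) * M) *
        (U * diagonal (fun i => Real.sqrt (σ i)) * M)ᵀ = U * diagonal σ * Uᵀ := by
  have hsqrt : diagonal (fun i => Real.sqrt (σ i)) * diagonal (fun i => Real.sqrt (σ i)) =
      diagonal σ := by
    rw [diagonal_mul_diagonal]
    exact congrArg diagonal (funext fun i => Real.mul_self_sqrt (hσ i))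
  simp only [transpose_mul, diagonal_transpose, Matrix.mul_assoc]
  rw [← Matrix.mul_assoc M, hM, Matrix.one_mul, ← Matrix.mul_assoc _ _ Uᵀ, hsqrt]

end Matrix

namespace SimpleGraph

variable {V R : Type*} [Fintype V] [DecidableEq V] (G : SimpleGraph V) [DecidableRel G.Adj]

section AddGroupWithOne

variable [AddGroupWithOne R]

theorem lapMatrix_apply_self (i : V) : G.lapMatrix R i i = G.degree i := by
  simp [lapMatrix, degMatrix]

theorem lapMatrix_apply_of_adj {i j : V} (h : G.Adj i j) : G.lapMatrix R i j = -1 := by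
  simp [lapMatrix, degMatrix, h.ne, h]

theorem lapMatrix_apply_of_ne_of_not_adj {i j : V} (hne : i ≠ j) (h : ¬G.Adj i j) :
    G.lapMatrix R i j = 0 := by
  simp [lapMatrix, degMatrix, hne, h]

end AddGroupWithOne

variable [Ring R] [LinearOrder R] [IsStrictOrderedRing R]

theorem neg_one_le_lapMatrix_apply (i j : V) : -1 ≤ G.lapMatrix R i j := by
  by_cases hij : i = j
  · subst hij
    rw [lapMatrix_apply_self]
    exact neg_one_lt_zero.le.trans (Nat.cast_nonneg _)
  by_cases hadj : G.Adj i j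
  · rw [G.lapMatrix_apply_of_adj hadj]
  · rw [G.lapMatrix_apply_of_ne_of_not_adj hij hadj]
    exact neg_one_lt_zero.le

theorem forall_lapMatrix_apply_le_iff_adj {i : V} (hi : 0 < G.degree i) (j : V) :
    (∀ l, G.lapMatrix R i j ≤ G.lapMatrix R i l) ↔ G.Adj i j := by
  refine ⟨fun hmin => ?_, fun hadj l => ?_⟩
  · obtain ⟨l, hl⟩ := (G.degree_pos_iff_exists_adj i).1 hi
    have hle : G.lapMatrix R i j ≤ -1 := (hmin l).trans_eq (G.lapMatrix_apply_of_adj hl)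
    by_contra hadj
    by_cases hij : i = j
    · subst hij
      rw [lapMatrix_apply_self] at hle
      exact absurd hle (not_le.2 (neg_one_lt_zero.trans_le (Nat.cast_nonneg _)))
    · rw [G.lapMatrix_apply_of_ne_of_not_adj hij hadj] at hle
      exact absurd hle (not_le.2 neg_one_lt_zero)
  · rw [G.lapMatrix_apply_of_adj hadj]
    exact G.neg_one_le_lapMatrix_apply i l

end SimpleGraph

theorem attn_neg_one_one {n : ℕ} {m : Type*} [Fintype m] [DecidableEq m] (dk : ℝ)
    (P : Matrix (Fin n) m ℝ) :
    attn dk P (-1) 1 = -(1 / Real.sqrt dk) • (P * Pᵀ) := by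
  simp [attn]

theorem isAdjIdentifying_of_mul_transpose_eq_lapMatrix {n : ℕ} {m : Type*} [Fintype m]
    [DecidableEq m] (G : SimpleGraph (Fin n)) [DecidableRel G.Adj] (hdeg : ∀ v, 0 < G.degree v)
    {dk : ℝ} (hdk : 0 < dk) (P : Matrix (Fin n) m ℝ) (hP : P * Pᵀ = G.lapMatrix ℝ) :
    IsAdjIdentifying dk G P := by
  refine ⟨-1, 1, fun i j => ?_⟩
  have hc : 0 < 1 / Real.sqrt dk := by positivity
  simp only [attn_neg_one_one, hP, Matrix.smul_apply, smul_eq_mul, neg_mul, neg_le_neg_iff,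
    mul_le_mul_iff_right₀ hc]
  exact G.forall_lapMatrix_apply_le_iff_adj (hdeg i) j

/-- if `L = U Σ Uᵀ` with `Σ` diagonal nonnegative, then for every permutation
matrix `M`, the matrix `U Σ^{1/2} M` factors the Laplacian and is adjacency-identifying. -/
theorem stmt8 {n : ℕ} (G : SimpleGraph (Fin n)) [DecidableRel G.Adj]
    (hdeg : ∀ v, 0 < G.degree v) (dk : ℝ) (hdk : 0 < dk)
    (U : Matrix (Fin n) (Fin n) ℝ) (σ : Fin n → ℝ) (hσ : ∀ i, 0 ≤ σ i)
    (hdecomp : G.lapMatrix ℝ = U * Matrix.diagonal σ * Uᵀ)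
    (M : Matrix (Fin n) (Fin n) ℝ)
    (hM01 : ∀ i j, M i j = 0 ∨ M i j = 1)
    (hMrow : ∀ i, ∃! j, M i j = 1) (hMcol : ∀ j, ∃! i, M i j = 1) :
    (U * Matrix.diagonal (fun i => Real.sqrt (σ i)) * M) *
        (U * Matrix.diagonal (fun i => Real.sqrt (σ i)) * M)ᵀ = G.lapMatrix ℝ ∧
      IsAdjIdentifying dk G (U * Matrix.diagonal (fun i => Real.sqrt (σ i)) * M) := by
  have hfactor : (U * Matrix.diagonal (fun i => Real.sqrt (σ i)) * M) *
      (U * Matrix.diagonal (fun i => Real.sqrt (σ i)) * M)ᵀ = G.lapMatrix ℝ := by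
    rw [hdecomp]
    exact U.mul_diagonal_sqrt_mul_mul_transpose σ hσ M
      (M.mul_transpose_eq_one_of_permutation hM01 hMrow hMcol)
  exact ⟨hfactor, isAdjIdentifying_of_mul_transpose_eq_lapMatrix G hdeg hdk _ hfactor⟩
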